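/- Let p, p′ ≥ 3 be odd integers such that the multiplicative order of 2 modulo p equals the multiplicative order of 2 modulo p′. Then for every f ∈ G: π_p(f(x)) = π_p(x) for every dyadic rational x with 0 < x < 1 if and only if π_{p′}(f(x)) = π_{p′}(x) for every dyadic rational x with 0 < x < 1. (The p-colorable subgroup F_p of Thompson's group F depends only on the multiplicative order of 2 modulo p; in particular F₅ = F₁₅.) -/

import Mathlib

/-- The function underlying the generator `f₀` of Thompson's group `F`:
the identity outside `[0,1]`; `2x` on `[0,1/4]`, `x + 1/4` on `[1/4,1/2]`,
`(x+1)/2` on `[1/2,1]`. -/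
noncomputable def f0fun : ℚ → ℚ := fun x =>
  if x < 0 then x
  else if 1 < x then x
  else if x ≤ 1 / 4 then 2 * x
  else if x ≤ 1 / 2 then x + 1 / 4
  else (x + 1) / 2

/-- The function underlying the generator `f₁` of Thompson's group `F`:
the identity outside `[0,1]`; `x` on `[0,1/2]`, `2x − 1/2` on `[1/2,5/8]`,
`x + 1/8` on `[5/8,3/4]`, `(x+1)/2` on `[3/4,1]`. -/
noncomputable def f1fun : ℚ → ℚ := fun x =>
  if x < 0 then x
  else if 1 < x then x
  else if x ≤ 1 / 2 then x
  else if x ≤ 5 / 8 then 2 * x - 1 / 2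
  else if x ≤ 3 / 4 then x + 1 / 8
  else (x + 1) / 2

/-- The realization `G ≤ Equiv.Perm ℚ` of Thompson's group `F`: the subgroup generated
by the permutations whose underlying functions are `f0fun` and `f1fun`. -/
noncomputable def thompsonF : Subgroup (Equiv.Perm ℚ) :=
  Subgroup.closure {g : Equiv.Perm ℚ | ⇑g = f0fun ∨ ⇑g = f1fun}

/-- A rational is dyadic if its (reduced) denominator is a power of two,
equivalently `2^n · x ∈ ℤ` for some `n`. -/
def IsDyadic (x : ℚ) : Prop := ∃ n : ℕ, x.den = 2 ^ n

/-- `π_p(a / 2^n) = a · (2⁻¹)^n ∈ ZMod p`, computed from the reduced fraction of `x`;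
for `p` odd this is the well-defined reduction of a dyadic rational modulo `p`. -/
def piP (p : ℕ) (x : ℚ) : ZMod p :=
  (x.num : ZMod p) * ((2 : ZMod p)⁻¹) ^ (padicValNat 2 x.den)

/-- `D_i = {x ∈ ℚ : 0 < x < 1, x dyadic, π_p(x) = i}`. -/
def DSet (p : ℕ) (i : ZMod p) : Set ℚ :=
  {x : ℚ | 0 < x ∧ x < 1 ∧ IsDyadic x ∧ piP p x = i}

/-!
Every element of `G` is an increasing bijection of `[0, 1]` that is affine, `z ↦ 2 ^ k * z + d`
with `d` dyadic, between finitely many dyadic breakpoints. Since `π_p` is additive on dyadic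
rationals and `π_p (2 ^ k * z) = 2 ^ k * π_p z`, such an `f` preserves `π_p` iff on every piece
`2 ^ k = 1` in `ZMod p`, i.e. `orderOf 2 ∣ k`: for sufficiency, propagate `π_p (f z) = π_p z`
from `f 0 = 0` across the breakpoints; for necessity, compare two consecutive dyadics
`m / 2 ^ N` and `(m + 1) / 2 ^ N` inside a piece. This condition on `f` mentions `p` only
through `orderOf (2 : ZMod p)`.
-/

open Set

lemma Finset.forall_gt_of_forall_gap {α : Type*} [LinearOrder α] (B : Finset α) {a : α}
    {P : α → Prop} (base : P a)
    (step : ∀ t z, a ≤ t → t < z → (t = a ∨ t ∈ B) → (∀ c ∈ B, c ∉ Set.Ioo t z) → P t → P z) :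
    ∀ z, a < z → P z := by
  classical
  intro z haz
  induction hn : (B.filter (· ∈ Set.Ioo a z)).card using Nat.strong_induction_on
    generalizing z with | _ n ih
  set S := B.filter (· ∈ Set.Ioo a z)
  rcases S.eq_empty_or_nonempty with hS | hS
  · refine step a z le_rfl haz (Or.inl rfl) (fun c hc hcz => ?_) base
    have hcS : c ∈ S := Finset.mem_filter.2 ⟨hc, hcz⟩
    simp [hS] at hcS
  obtain ⟨htB, hat, htz⟩ := Finset.mem_filter.1 (S.max'_mem hS)
  refine step _ z hat.le htz (Or.inr htB) (fun c hc hcI => ?_) (ih _ ?_ _ hat rfl)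
  · exact (S.le_max' c (Finset.mem_filter.2 ⟨hc, hat.trans hcI.1, hcI.2⟩)).not_gt hcI.1
  · rw [← hn]
    refine Finset.card_lt_card ⟨fun c hc => ?_, fun hsub => ?_⟩
    · obtain ⟨hcB, hac, hct⟩ := Finset.mem_filter.1 hc
      exact Finset.mem_filter.2 ⟨hcB, hac, hct.trans htz⟩
    · exact (Finset.mem_filter.1 (hsub (S.max'_mem hS))).2.2.false

lemma isDyadic_iff {x : ℚ} : IsDyadic x ↔ ∃ (m : ℤ) (n : ℕ), x = m / 2 ^ n := by
  constructor
  · rintro ⟨n, hn⟩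
    refine ⟨x.num, n, ?_⟩
    conv_lhs => rw [← Rat.num_div_den x, hn]
    push_cast; rfl
  · rintro ⟨m, n, rfl⟩
    have hdvd : ((m : ℚ) / 2 ^ n).den ∣ 2 ^ n := by
      have := Rat.den_dvd m (2 ^ n)
      rw [Rat.divInt_eq_div] at this
      push_cast at this
      exact_mod_cast this
    obtain ⟨j, -, hj⟩ := (Nat.dvd_prime_pow Nat.prime_two).1 hdvd
    exact ⟨j, hj⟩

lemma isDyadic_intCast_div_two_pow (m : ℤ) (n : ℕ) : IsDyadic (m / 2 ^ n) :=
  isDyadic_iff.2 ⟨m, n, rfl⟩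

lemma IsDyadic.add {x y : ℚ} (hx : IsDyadic x) (hy : IsDyadic y) : IsDyadic (x + y) := by
  obtain ⟨m, n, rfl⟩ := isDyadic_iff.1 hx
  obtain ⟨m', n', rfl⟩ := isDyadic_iff.1 hy
  exact isDyadic_iff.2 ⟨m * 2 ^ n' + m' * 2 ^ n, n + n', by field_simp; push_cast; ring⟩

lemma IsDyadic.neg {x : ℚ} (hx : IsDyadic x) : IsDyadic (-x) := by
  obtain ⟨m, n, rfl⟩ := isDyadic_iff.1 hx
  exact isDyadic_iff.2 ⟨-m, n, by push_cast; ring⟩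

lemma IsDyadic.sub {x y : ℚ} (hx : IsDyadic x) (hy : IsDyadic y) : IsDyadic (x - y) :=
  sub_eq_add_neg x y ▸ hx.add hy.neg

lemma IsDyadic.mul {x y : ℚ} (hx : IsDyadic x) (hy : IsDyadic y) : IsDyadic (x * y) := by
  obtain ⟨m, n, rfl⟩ := isDyadic_iff.1 hx
  obtain ⟨m', n', rfl⟩ := isDyadic_iff.1 hy
  exact isDyadic_iff.2 ⟨m * m', n + n', by push_cast; ring⟩

lemma isDyadic_two_zpow (k : ℤ) : IsDyadic ((2 : ℚ) ^ k) := by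
  obtain ⟨j, rfl | rfl⟩ := Int.eq_nat_or_neg k
  · exact isDyadic_iff.2 ⟨2 ^ j, 0, by simp⟩
  · exact isDyadic_iff.2 ⟨1, j, by simp⟩

lemma exists_consecutive_dyadics_btwn {x y : ℚ} (hxy : x < y) :
    ∃ (m : ℤ) (N : ℕ), x < m / 2 ^ N ∧ (m + 1) / 2 ^ N < y := by
  obtain ⟨N, hN⟩ := pow_unbounded_of_one_lt (2 / (y - x)) one_lt_two
  have hN' : 2 < (y - x) * 2 ^ N := by
    rwa [div_lt_iff₀ (sub_pos.2 hxy), mul_comm] at hN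
  refine ⟨⌊x * 2 ^ N⌋ + 1, N, ?_, ?_⟩
  all_goals
    have := Int.floor_le (x * 2 ^ N)
    have := Int.lt_floor_add_one (x * 2 ^ N)
  · rw [lt_div_iff₀ (by positivity)]; push_cast; linarith
  · rw [div_lt_iff₀ (by positivity)]; push_cast; linarith

def dyadicAffine (k : ℤ) (c : ℚ) (z : ℚ) : ℚ := 2 ^ k * z + c

lemma dyadicAffine_comp (j k : ℤ) (c d : ℚ) :
    dyadicAffine j d ∘ dyadicAffine k c = dyadicAffine (j + k) (2 ^ j * c + d) := by
  ext z
  simp only [Function.comp, dyadicAffine, zpow_add₀ (two_ne_zero' ℚ)]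
  ring

lemma dyadicAffine_neg_apply_dyadicAffine (k : ℤ) (c z : ℚ) :
    dyadicAffine (-k) (-(2 ^ (-k) * c)) (dyadicAffine k c z) = z := by
  simp only [dyadicAffine, zpow_neg]
  field_simp
  ring

lemma isDyadic_dyadicAffine_iff {k : ℤ} {c z : ℚ} (hc : IsDyadic c) :
    IsDyadic (dyadicAffine k c z) ↔ IsDyadic z := by
  refine ⟨fun h => ?_, fun h => ((isDyadic_two_zpow k).mul h).add hc⟩
  rw [← dyadicAffine_neg_apply_dyadicAffine k c z]
  exact ((isDyadic_two_zpow _).mul h).add ((isDyadic_two_zpow _).mul hc).neg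

section Residue

variable {p : ℕ} (hp : Odd p)
include hp

def twoUnit : (ZMod p)ˣ := ZMod.unitOfCoprime 2 hp.coprime_two_left

@[simp] lemma coe_twoUnit : (twoUnit hp : ZMod p) = 2 := by
  simp [twoUnit]

@[simp] lemma coe_twoUnit_inv : ((twoUnit hp)⁻¹ : (ZMod p)ˣ) = (2 : ZMod p)⁻¹ := by
  rw [← ZMod.inv_coe_unit, coe_twoUnit]

lemma two_pow_mul_inv_two_pow (n : ℕ) : (2 : ZMod p) ^ n * 2⁻¹ ^ n = 1 := by
  simpa [← inv_pow] using (twoUnit hp ^ n).mul_inv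

lemma coe_twoUnit_zpow_eq_one_iff {k : ℤ} :
    ((twoUnit hp ^ k : (ZMod p)ˣ) : ZMod p) = 1 ↔ (orderOf (2 : ZMod p) : ℤ) ∣ k := by
  rw [Units.val_eq_one, ← orderOf_dvd_iff_zpow_eq_one, ← orderOf_units, coe_twoUnit]

lemma piP_intCast_div_two_pow (m : ℤ) (n : ℕ) :
    piP p (m / 2 ^ n) = m * (2 : ZMod p)⁻¹ ^ n := by
  set x : ℚ := m / 2 ^ n with hx
  obtain ⟨j, hj⟩ : IsDyadic x := isDyadic_iff.2 ⟨m, n, rfl⟩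
  have hcross : x.num * 2 ^ n = m * 2 ^ j := by
    have h : (x.num : ℚ) * 2 ^ n = m * 2 ^ j := by
      rw [← Rat.mul_den_eq_num, hj, hx]; push_cast; field_simp
    exact_mod_cast h
  have hcross' := congrArg (Int.cast : ℤ → ZMod p) hcross
  push_cast at hcross'
  simp only [piP, hj, padicValNat.prime_pow]
  linear_combination (2⁻¹ ^ j * 2⁻¹ ^ n) * hcross' - x.num * 2⁻¹ ^ j * two_pow_mul_inv_two_pow hp n
    + m * 2⁻¹ ^ n * two_pow_mul_inv_two_pow hp j

lemma piP_add {x y : ℚ} (hx : IsDyadic x) (hy : IsDyadic y) :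
    piP p (x + y) = piP p x + piP p y := by
  obtain ⟨m, n, rfl⟩ := isDyadic_iff.1 hx
  obtain ⟨m', n', rfl⟩ := isDyadic_iff.1 hy
  have hsum : (m : ℚ) / 2 ^ n + m' / 2 ^ n' =
      ((m * 2 ^ n' + m' * 2 ^ n : ℤ) : ℚ) / 2 ^ (n + n') := by
    field_simp; push_cast; ring
  simp only [hsum, piP_intCast_div_two_pow hp]
  push_cast
  rw [pow_add]
  linear_combination m * 2⁻¹ ^ n * two_pow_mul_inv_two_pow hp n'
    + m' * 2⁻¹ ^ n' * two_pow_mul_inv_two_pow hp n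

lemma piP_two_zpow_mul {x : ℚ} (hx : IsDyadic x) (k : ℤ) :
    piP p (2 ^ k * x) = ((twoUnit hp ^ k : (ZMod p)ˣ) : ZMod p) * piP p x := by
  obtain ⟨m, n, rfl⟩ := isDyadic_iff.1 hx
  obtain ⟨j, rfl | rfl⟩ := Int.eq_nat_or_neg k
  · have h : (2 : ℚ) ^ (j : ℤ) * (m / 2 ^ n) = ((2 ^ j * m : ℤ) : ℚ) / 2 ^ n := by
      rw [zpow_natCast, Int.cast_mul, Int.cast_pow, Int.cast_ofNat]; ring
    rw [h, piP_intCast_div_two_pow hp, piP_intCast_div_two_pow hp, zpow_natCast,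
      Units.val_pow_eq_pow_val, coe_twoUnit]
    push_cast; ring
  · have h : (2 : ℚ) ^ (-(j : ℤ)) * (m / 2 ^ n) = m / 2 ^ (n + j) := by
      rw [zpow_neg, zpow_natCast, pow_add]; ring
    rw [h, piP_intCast_div_two_pow hp, piP_intCast_div_two_pow hp, zpow_neg, zpow_natCast,
      ← inv_pow, Units.val_pow_eq_pow_val, coe_twoUnit_inv]
    ring

lemma piP_dyadicAffine {k : ℤ} {c z : ℚ} (hc : IsDyadic c) (hz : IsDyadic z) :
    piP p (dyadicAffine k c z) =
      ((twoUnit hp ^ k : (ZMod p)ˣ) : ZMod p) * piP p z + piP p c := by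
  rw [dyadicAffine, piP_add hp ((isDyadic_two_zpow k).mul hz) hc, piP_two_zpow_mul hp hz]

end Residue

def PiecewiseDyadicAffineOn (f : ℚ → ℚ) (a b : ℚ) : Prop :=
  ∃ B : Finset ℚ, (∀ c ∈ B, IsDyadic c) ∧
    ∀ x y, a ≤ x → y ≤ b → x < y → (∀ c ∈ B, c ∉ Ioo x y) →
      ∃ (k : ℤ) (d : ℚ), IsDyadic d ∧ EqOn f (dyadicAffine k d) (Icc x y)

namespace PiecewiseDyadicAffineOn

lemma of_eqOn {f : ℚ → ℚ} {a b d : ℚ} {k : ℤ} (hd : IsDyadic d)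
    (h : EqOn f (dyadicAffine k d) (Icc a b)) : PiecewiseDyadicAffineOn f a b :=
  ⟨∅, by simp, fun _ _ hax hyb _ _ => ⟨k, d, hd, h.mono (Icc_subset_Icc hax hyb)⟩⟩

lemma trans {f : ℚ → ℚ} {a b c : ℚ} (hab : PiecewiseDyadicAffineOn f a b)
    (hbc : PiecewiseDyadicAffineOn f b c) (hb : IsDyadic b) : PiecewiseDyadicAffineOn f a c := by
  classical
  obtain ⟨B₁, hB₁, h₁⟩ := hab
  obtain ⟨B₂, hB₂, h₂⟩ := hbc
  refine ⟨insert b (B₁ ∪ B₂), ?_, fun x y hax hyc hxy hgap => ?_⟩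
  · simp only [Finset.mem_insert, Finset.mem_union]
    rintro e (rfl | he | he)
    exacts [hb, hB₁ e he, hB₂ e he]
  · rcases le_or_gt y b with hyb | hby
    · exact h₁ x y hax hyb hxy fun e he => hgap e (by simp [he])
    · have hbx : b ≤ x := not_lt.1 fun hxb => hgap b (Finset.mem_insert_self _ _) ⟨hxb, hby⟩
      exact h₂ x y hbx hyc hxy fun e he => hgap e (by simp [he])

lemma comp {f : ℚ → ℚ} {g : Equiv.Perm ℚ} {a b : ℚ} (hg_mono : StrictMono g)
    (hg_dyadic : ∀ x, IsDyadic (g x) → IsDyadic x)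
    (hf : PiecewiseDyadicAffineOn f (g a) (g b)) (hg : PiecewiseDyadicAffineOn g a b) :
    PiecewiseDyadicAffineOn (f ∘ g) a b := by
  classical
  obtain ⟨Bf, hBf, hf⟩ := hf
  obtain ⟨Bg, hBg, hg⟩ := hg
  refine ⟨Bg ∪ Bf.image g.symm, ?_, fun x y hax hyb hxy hgap => ?_⟩
  · simp only [Finset.mem_union, Finset.mem_image]
    rintro c (hc | ⟨e, he, rfl⟩)
    exacts [hBg c hc, hg_dyadic _ (by simpa using hBf e he)]
  obtain ⟨k, c, hc, hgxy⟩ :=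
    hg x y hax hyb hxy fun e he => hgap e (Finset.mem_union_left _ he)
  have hf_gap : ∀ e ∈ Bf, e ∉ Ioo (g x) (g y) := fun e he ⟨hxe, hey⟩ =>
    hgap (g.symm e) (Finset.mem_union_right _ (Finset.mem_image_of_mem _ he))
      ⟨hg_mono.lt_iff_lt.1 (by simpa using hxe), hg_mono.lt_iff_lt.1 (by simpa using hey)⟩
  obtain ⟨j, d, hd, hfxy⟩ := hf (g x) (g y) (hg_mono.monotone hax) (hg_mono.monotone hyb)
    (hg_mono hxy) hf_gap
  have hcomp : EqOn (f ∘ g) (dyadicAffine j d ∘ dyadicAffine k c) (Icc x y) := fun z hz => by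
    simp only [Function.comp, ← hgxy hz]
    exact hfxy ⟨hg_mono.monotone hz.1, hg_mono.monotone hz.2⟩
  exact ⟨j + k, 2 ^ j * c + d, ((isDyadic_two_zpow j).mul hc).add hd,
    dyadicAffine_comp j k c d ▸ hcomp⟩

lemma symm {f : Equiv.Perm ℚ} {a b : ℚ} (hf_mono : StrictMono f)
    (hf_dyadic : ∀ x, IsDyadic x → IsDyadic (f x)) (hf : PiecewiseDyadicAffineOn f a b) :
    PiecewiseDyadicAffineOn f.symm (f a) (f b) := by
  classical
  obtain ⟨B, hB, hf⟩ := hf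
  have hsymm_mono : StrictMono f.symm := fun x y h => hf_mono.lt_iff_lt.1 (by simpa using h)
  refine ⟨B.image f, ?_, fun x y hax hyb hxy hgap => ?_⟩
  · simp only [Finset.mem_image]
    rintro _ ⟨c, hc, rfl⟩
    exact hf_dyadic c (hB c hc)
  have hgap' : ∀ e ∈ B, e ∉ Ioo (f.symm x) (f.symm y) := fun e he ⟨hxe, hey⟩ =>
    hgap (f e) (Finset.mem_image_of_mem _ he)
      ⟨by simpa using hf_mono hxe, by simpa using hf_mono hey⟩
  obtain ⟨k, c, hc, hfxy⟩ := hf (f.symm x) (f.symm y) (by simpa using hsymm_mono.monotone hax)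
    (by simpa using hsymm_mono.monotone hyb) (hsymm_mono hxy) hgap'
  refine ⟨-k, -(2 ^ (-k) * c), ((isDyadic_two_zpow _).mul hc).neg, fun z hz => ?_⟩
  have hz' : f.symm z ∈ Icc (f.symm x) (f.symm y) :=
    ⟨hsymm_mono.monotone hz.1, hsymm_mono.monotone hz.2⟩
  conv_rhs => rw [← f.apply_symm_apply z, hfxy hz']
  exact (dyadicAffine_neg_apply_dyadicAffine k c _).symm

end PiecewiseDyadicAffineOn

structure IsDyadicPL (f : Equiv.Perm ℚ) : Prop where
  strictMono : StrictMono f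
  map_zero : f 0 = 0
  map_one : f 1 = 1
  isDyadic_apply_iff : ∀ x, IsDyadic (f x) ↔ IsDyadic x
  piecewise : PiecewiseDyadicAffineOn f 0 1

def dyadicPL : Subgroup (Equiv.Perm ℚ) where
  carrier := {f | IsDyadicPL f}
  one_mem' := ⟨strictMono_id, rfl, rfl, fun _ => Iff.rfl,
    .of_eqOn (k := 0) (d := 0) ⟨0, by norm_num⟩ fun z _ => by simp [dyadicAffine]⟩
  mul_mem' {f g} hf hg := by
    refine ⟨hf.strictMono.comp hg.strictMono, by simp [hf.map_zero, hg.map_zero],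
      by simp [hf.map_one, hg.map_one],
      fun x => by simp [hf.isDyadic_apply_iff, hg.isDyadic_apply_iff], ?_⟩
    have hf_pieces := hf.piecewise
    rw [← hg.map_zero, ← hg.map_one] at hf_pieces
    exact hf_pieces.comp hg.strictMono (fun x => (hg.isDyadic_apply_iff x).1) hg.piecewise
  inv_mem' {f} hf := by
    have hinv := hf.piecewise.symm hf.strictMono fun x => (hf.isDyadic_apply_iff x).2
    rw [hf.map_zero, hf.map_one] at hinv
    refine ⟨fun x y h => hf.strictMono.lt_iff_lt.1 (by simpa using h), ?_, ?_, fun x => ?_, hinv⟩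
    · simpa using (congrArg f.symm hf.map_zero).symm
    · simpa using (congrArg f.symm hf.map_one).symm
    · rw [← hf.isDyadic_apply_iff]; simp

lemma isDyadic_apply_iff_of_forall_eq_dyadicAffine {f : ℚ → ℚ}
    (h : ∀ x, ∃ (k : ℤ) (d : ℚ), IsDyadic d ∧ f x = dyadicAffine k d x) (x : ℚ) :
    IsDyadic (f x) ↔ IsDyadic x := by
  obtain ⟨k, d, hd, hx⟩ := h x
  rw [hx, isDyadic_dyadicAffine_iff hd]

lemma f0fun_strictMono : StrictMono f0fun := by
  intro a b hab
  simp only [f0fun]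
  split_ifs <;> linarith

lemma f0fun_eq_dyadicAffine (x : ℚ) :
    ∃ (k : ℤ) (d : ℚ), IsDyadic d ∧ f0fun x = dyadicAffine k d x := by
  unfold f0fun dyadicAffine
  split_ifs
  exacts [⟨0, 0, ⟨0, by norm_num⟩, by simp⟩, ⟨0, 0, ⟨0, by norm_num⟩, by simp⟩,
    ⟨1, 0, ⟨0, by norm_num⟩, by simp⟩, ⟨0, 1 / 4, ⟨2, by norm_num⟩, by simp⟩,
    ⟨-1, 1 / 2, ⟨1, by norm_num⟩, by simp; ring⟩]

lemma f0fun_piecewise : PiecewiseDyadicAffineOn f0fun 0 1 := by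
  refine .trans (b := 1 / 4) (.of_eqOn (k := 1) (d := 0) ⟨0, by norm_num⟩ ?_)
    (.trans (b := 1 / 2) (.of_eqOn (k := 0) (d := 1 / 4) ⟨2, by norm_num⟩ ?_)
      (.of_eqOn (k := -1) (d := 1 / 2) ⟨1, by norm_num⟩ ?_) ⟨1, by norm_num⟩)
    ⟨2, by norm_num⟩
  all_goals
    rintro z ⟨h₁, h₂⟩
    simp only [f0fun, dyadicAffine]
    split_ifs <;> norm_num <;> linarith

lemma f1fun_strictMono : StrictMono f1fun := by
  intro a b hab
  simp only [f1fun]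
  split_ifs <;> linarith

lemma f1fun_eq_dyadicAffine (x : ℚ) :
    ∃ (k : ℤ) (d : ℚ), IsDyadic d ∧ f1fun x = dyadicAffine k d x := by
  unfold f1fun dyadicAffine
  split_ifs
  exacts [⟨0, 0, ⟨0, by norm_num⟩, by simp⟩, ⟨0, 0, ⟨0, by norm_num⟩, by simp⟩,
    ⟨0, 0, ⟨0, by norm_num⟩, by simp⟩, ⟨1, -(1 / 2), ⟨1, by norm_num⟩, by simp; ring⟩,
    ⟨0, 1 / 8, ⟨3, by norm_num⟩, by simp⟩, ⟨-1, 1 / 2, ⟨1, by norm_num⟩, by simp; ring⟩]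

lemma f1fun_piecewise : PiecewiseDyadicAffineOn f1fun 0 1 := by
  refine .trans (b := 1 / 2) (.of_eqOn (k := 0) (d := 0) ⟨0, by norm_num⟩ ?_)
    (.trans (b := 5 / 8) (.of_eqOn (k := 1) (d := -(1 / 2)) ⟨1, by norm_num⟩ ?_)
      (.trans (b := 3 / 4) (.of_eqOn (k := 0) (d := 1 / 8) ⟨3, by norm_num⟩ ?_)
        (.of_eqOn (k := -1) (d := 1 / 2) ⟨1, by norm_num⟩ ?_) ⟨2, by norm_num⟩)
      ⟨3, by norm_num⟩) ⟨1, by norm_num⟩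
  all_goals
    rintro z ⟨h₁, h₂⟩
    simp only [f1fun, dyadicAffine]
    split_ifs <;> norm_num <;> linarith

lemma thompsonF_le_dyadicPL : thompsonF ≤ dyadicPL := by
  refine Subgroup.closure_le _ |>.2 ?_
  rintro g (hg | hg)
  · exact ⟨hg ▸ f0fun_strictMono, by norm_num [hg, f0fun], by norm_num [hg, f0fun],
      hg ▸ isDyadic_apply_iff_of_forall_eq_dyadicAffine f0fun_eq_dyadicAffine,
      hg ▸ f0fun_piecewise⟩
  · exact ⟨hg ▸ f1fun_strictMono, by norm_num [hg, f1fun], by norm_num [hg, f1fun],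
      hg ▸ isDyadic_apply_iff_of_forall_eq_dyadicAffine f1fun_eq_dyadicAffine,
      hg ▸ f1fun_piecewise⟩

def SlopesDivisibleBy (f : ℚ → ℚ) (n : ℕ) : Prop :=
  ∀ x y, 0 ≤ x → y ≤ 1 → x < y →
    ∀ (k : ℤ) (d : ℚ), EqOn f (dyadicAffine k d) (Icc x y) → (n : ℤ) ∣ k

section Colorable

variable {p : ℕ} (hp : Odd p) {f : Equiv.Perm ℚ}
include hp

lemma slopesDivisibleBy_of_forall_piP_eq (hf : ∀ x, IsDyadic x → IsDyadic (f x))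
    (h : ∀ x, IsDyadic x → 0 < x → x < 1 → piP p (f x) = piP p x) :
    SlopesDivisibleBy f (orderOf (2 : ZMod p)) := by
  intro x y hx hy hxy k d hfxy
  obtain ⟨m, N, hxz₁, hz₂y⟩ := exists_consecutive_dyadics_btwn hxy
  rw [← Int.cast_one, ← Int.cast_add] at hz₂y
  have hz₁₂ : (m : ℚ) / 2 ^ N < ((m + 1 : ℤ) : ℚ) / 2 ^ N := by
    gcongr; exact_mod_cast Int.lt_succ m
  have hz₁ := isDyadic_intCast_div_two_pow m N
  have hz₂ := isDyadic_intCast_div_two_pow (m + 1) N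
  have hfz₁ := hfxy ⟨hxz₁.le, (hz₁₂.trans hz₂y).le⟩
  have hfz₂ := hfxy ⟨(hxz₁.trans hz₁₂).le, hz₂y.le⟩
  have hd : IsDyadic d := by
    rw [show d = f (m / 2 ^ N) - 2 ^ k * (m / 2 ^ N) by rw [hfz₁, dyadicAffine]; ring]
    exact (hf _ hz₁).sub ((isDyadic_two_zpow k).mul hz₁)
  have e₁ := h _ hz₁ (by linarith) (by linarith)
  have e₂ := h _ hz₂ (by linarith) (by linarith)
  rw [hfz₁, piP_dyadicAffine hp hd hz₁, piP_intCast_div_two_pow hp] at e₁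
  rw [hfz₂, piP_dyadicAffine hp hd hz₂, piP_intCast_div_two_pow hp] at e₂
  -- `π_p` of the two consecutive dyadics differs by the unit `2⁻ᴺ`, which forces `2 ^ k = 1`.
  refine (coe_twoUnit_zpow_eq_one_iff hp).1 ?_
  push_cast at e₂
  linear_combination 2 ^ N * (e₂ - e₁) - (((twoUnit hp ^ k : (ZMod p)ˣ) : ZMod p) - 1) *
    two_pow_mul_inv_two_pow hp N

lemma forall_piP_eq_of_slopesDivisibleBy (hf : IsDyadicPL f)
    (h : SlopesDivisibleBy f (orderOf (2 : ZMod p))) :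
    ∀ x, IsDyadic x → 0 < x → x < 1 → piP p (f x) = piP p x := by
  obtain ⟨B, hB, hpieces⟩ := hf.piecewise
  suffices ∀ z, 0 < z → IsDyadic z → z < 1 → piP p (f z) = piP p z from
    fun x hx h₀ h₁ => this x h₀ hx h₁
  refine B.forall_gt_of_forall_gap (fun _ _ => by rw [hf.map_zero])
    fun t z ht htz htB hgap ih hz hz₁ => ?_
  have htd : IsDyadic t := htB.elim (· ▸ ⟨0, by norm_num⟩) (hB t)
  obtain ⟨k, d, hd, hfk⟩ := hpieces t z ht hz₁.le htz hgap
  have hk := (coe_twoUnit_zpow_eq_one_iff hp).2 (h t z ht hz₁.le htz k d hfk)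
  have hft := ih htd (htz.trans hz₁)
  rw [hfk ⟨le_rfl, htz.le⟩, piP_dyadicAffine hp hd htd, hk, one_mul, add_eq_left] at hft
  rw [hfk ⟨htz.le, le_rfl⟩, piP_dyadicAffine hp hd hz, hk, one_mul, hft, add_zero]

lemma forall_piP_eq_iff_slopesDivisibleBy (hf : IsDyadicPL f) :
    (∀ x, IsDyadic x → 0 < x → x < 1 → piP p (f x) = piP p x) ↔
      SlopesDivisibleBy f (orderOf (2 : ZMod p)) :=
  ⟨slopesDivisibleBy_of_forall_piP_eq hp fun x => (hf.isDyadic_apply_iff x).2,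
    forall_piP_eq_of_slopesDivisibleBy hp hf⟩

end Colorable

theorem pColorable_depends_only_on_order_general (p p' : ℕ) (hodd : Odd p)
    (hodd' : Odd p')
    (horder : orderOf (2 : ZMod p) = orderOf (2 : ZMod p'))
    (f : Equiv.Perm ℚ) (hf : f ∈ thompsonF) :
    (∀ x : ℚ, IsDyadic x → 0 < x → x < 1 → piP p (f x) = piP p x) ↔
      (∀ x : ℚ, IsDyadic x → 0 < x → x < 1 → piP p' (f x) = piP p' x) := by
  have hPL : IsDyadicPL f := thompsonF_le_dyadicPL hf
  rw [forall_piP_eq_iff_slopesDivisibleBy hodd hPL, forall_piP_eq_iff_slopesDivisibleBy hodd' hPL,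
    horder]

/-- Let `p, p′ ≥ 3` be odd integers with the same multiplicative order of `2`.  Then an
element `f` of Thompson's group `G` preserves all residues `π_p` of dyadic rationals in
`(0,1)` iff it preserves all residues `π_{p′}`: the `p`-colorable subgroup depends only
on the multiplicative order of `2` modulo `p`. -/
theorem pColorable_depends_only_on_order (p p' : ℕ) (hp3 : 3 ≤ p) (hodd : Odd p)
    (hp3' : 3 ≤ p') (hodd' : Odd p')
    (horder : orderOf (2 : ZMod p) = orderOf (2 : ZMod p'))
    (f : Equiv.Perm ℚ) (hf : f ∈ thompsonF) :
    (∀ x : ℚ, IsDyadic x → 0 < x → x < 1 → piP p (f x) = piP p x) ↔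
      (∀ x : ℚ, IsDyadic x → 0 < x → x < 1 → piP p' (f x) = piP p' x) :=
  pColorable_depends_only_on_order_general p p' hodd hodd' horder f hf
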